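/- arXiv:2111.04658 — 3 statements merged into one kernel-verified Lean document; each statement's English description precedes it below -/
import Mathlib

section
/- If for every rational s in [0,1] there is a null set N_s such that the sequence of functions F_n(s,ω) converges to s for all ω outside N_s, and for each n and ω the map s ↦ F_n(s,ω) is monotone increasing on [0,1], then there exists a single null set N such that for all ω outside N and all s in [0,1], F_n(s,ω) converges to s. -/
open MeasureTheory Filter Set

/-- If for every rational `s ∈ [0,1]` there is a null set `N_s` outside of which
`F n s ω → s`, and for each `n, ω` the map `s ↦ F n s ω` is monotone on `[0,1]`,
then there is a single null set outside of which convergence holds for all real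
`s ∈ [0,1]` simultaneously. -/
theorem single_null_set_of_rational_convergence
    {Ω : Type*} [MeasurableSpace Ω] (μ : Measure Ω) [IsProbabilityMeasure μ]
    (F : ℕ → ℝ → Ω → ℝ)
    (hmono : ∀ n ω, MonotoneOn (fun s => F n s ω) (Icc (0:ℝ) 1))
    (hconv : ∀ q : ℚ, (q:ℝ) ∈ Icc (0:ℝ) 1 →
      ∃ N : Set Ω, μ N = 0 ∧ ∀ ω ∉ N,
        Tendsto (fun n => F n (q:ℝ) ω) atTop (nhds (q:ℝ))) :
    ∃ N : Set Ω, μ N = 0 ∧ ∀ ω ∉ N, ∀ s ∈ Icc (0:ℝ) 1,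
      Tendsto (fun n => F n s ω) atTop (nhds s) := by
  choose N hN0 hNt using hconv
  refine ⟨⋃ q : ℚ, ⋃ h : (q:ℝ) ∈ Icc (0:ℝ) 1, N q h, ?_, ?_⟩
  · exact measure_iUnion_null fun q => measure_iUnion_null fun h => hN0 q h
  · intro ω hω s hs
    have hω' : ∀ (q : ℚ) (h : (q:ℝ) ∈ Icc (0:ℝ) 1), ω ∉ N q h := by
      simpa [mem_iUnion] using hω
    have htq : ∀ (q : ℚ), (q:ℝ) ∈ Icc (0:ℝ) 1 →
        Tendsto (fun n => F n (q:ℝ) ω) atTop (nhds (q:ℝ)) :=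
      fun q hq => hNt q hq ω (hω' q hq)
    rw [tendsto_order]
    constructor
    · intro b hb
      rcases lt_or_ge b 0 with h0 | h0
      · have t0 : Tendsto (fun n => F n (0:ℝ) ω) atTop (nhds (0:ℝ)) := by
          simpa using htq 0 (by norm_num)
        filter_upwards [t0.eventually (eventually_gt_nhds h0)] with n hn
        exact lt_of_lt_of_le hn (hmono n ω (by norm_num) hs hs.1)
      · obtain ⟨q, hq1, hq2⟩ := exists_rat_btwn hb
        have hqIcc : (q:ℝ) ∈ Icc (0:ℝ) 1 :=
          ⟨le_of_lt (lt_of_le_of_lt h0 hq1), le_trans hq2.le hs.2⟩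
        filter_upwards [(htq q hqIcc).eventually (eventually_gt_nhds hq1)] with n hn
        exact lt_of_lt_of_le hn (hmono n ω hqIcc hs hq2.le)
    · intro b hb
      rcases le_or_gt b 1 with h1 | h1
      · obtain ⟨q, hq1, hq2⟩ := exists_rat_btwn hb
        have hqIcc : (q:ℝ) ∈ Icc (0:ℝ) 1 :=
          ⟨le_trans hs.1 hq1.le, le_of_lt (lt_of_lt_of_le hq2 h1)⟩
        filter_upwards [(htq q hqIcc).eventually (eventually_lt_nhds hq2)] with n hn
        exact lt_of_le_of_lt (hmono n ω hs hqIcc hq1.le) hn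
      · have t1 : Tendsto (fun n => F n (1:ℝ) ω) atTop (nhds (1:ℝ)) := by
          simpa using htq 1 (by norm_num)
        filter_upwards [t1.eventually (eventually_lt_nhds h1)] with n hn
        exact lt_of_le_of_lt (hmono n ω hs (by norm_num) hs.2) hn
end

section
/- Let w_1,…,w_n be 𝒢-measurable nonnegative weights summing to 1, and H_1,…,H_n random variables with |H_i| ≤ 1 and E[H_i | 𝒢] = 0, conditionally independent given 𝒢. Then for every t ∈ ℝ, E[exp(t Σ_i w_i H_i)] ≤ E[exp((t²/2) Σ_i w_i²)]. -/
open MeasureTheory Finset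

section Aux

open Real ProbabilityTheory

/-- Hoeffding's lemma for a centered random variable bounded by 1. -/
lemma hoeffding_aux_lemma {Ω : Type*} {mΩ : MeasurableSpace Ω} (ν : Measure Ω)
    [IsProbabilityMeasure ν] {X : Ω → ℝ} (hX : Measurable X)
    (hbdd : ∀ᵐ ω ∂ν, |X ω| ≤ 1) (hmean : ∫ ω, X ω ∂ν = 0) (s : ℝ) :
    ∫ ω, Real.exp (s * X ω) ∂ν ≤ Real.exp (s ^ 2 / 2) := by
  have hXint : Integrable X ν := by
    refine Integrable.mono' (integrable_const 1) hX.aestronglyMeasurable ?_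
    filter_upwards [hbdd] with ω hω
    simpa using hω
  have hint : Integrable (fun ω => Real.exp (s * X ω)) ν := by
    refine Integrable.mono' (integrable_const (Real.exp |s|))
      ((hX.const_mul s).exp).aestronglyMeasurable ?_
    filter_upwards [hbdd] with ω hω
    rw [Real.norm_eq_abs, abs_of_pos (Real.exp_pos _)]
    refine Real.exp_le_exp.2 ?_
    calc s * X ω ≤ |s * X ω| := le_abs_self _
      _ = |s| * |X ω| := abs_mul _ _
      _ ≤ |s| * 1 := mul_le_mul_of_nonneg_left hω (abs_nonneg s)
      _ = |s| := mul_one _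
  set c₁ : ℝ := (Real.exp s + Real.exp (-s)) / 2 with hc₁
  set c₂ : ℝ := (Real.exp s - Real.exp (-s)) / 2 with hc₂
  have hptwise : ∀ᵐ ω ∂ν, Real.exp (s * X ω) ≤ c₁ + c₂ * X ω := by
    filter_upwards [hbdd] with ω hω
    have h1 : -1 ≤ X ω := (abs_le.1 hω).1
    have h2 : X ω ≤ 1 := (abs_le.1 hω).2
    have key := convexOn_exp.2 (Set.mem_univ (-s)) (Set.mem_univ s)
      (show (0:ℝ) ≤ (1 - X ω) / 2 by linarith)
      (show (0:ℝ) ≤ (1 + X ω) / 2 by linarith)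
      (show (1 - X ω) / 2 + (1 + X ω) / 2 = 1 by ring)
    have heq : ((1 - X ω) / 2) • (-s) + ((1 + X ω) / 2) • s = s * X ω := by
      simp only [smul_eq_mul]; ring
    rw [heq] at key
    calc Real.exp (s * X ω)
        ≤ ((1 - X ω) / 2) • Real.exp (-s) + ((1 + X ω) / 2) • Real.exp s := key
      _ = c₁ + c₂ * X ω := by simp only [smul_eq_mul, hc₁, hc₂]; ring
  have hrint : Integrable (fun ω => c₁ + c₂ * X ω) ν :=
    (integrable_const c₁).add (hXint.const_mul c₂)
  calc ∫ ω, Real.exp (s * X ω) ∂ν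
      ≤ ∫ ω, (c₁ + c₂ * X ω) ∂ν := integral_mono_ae hint hrint hptwise
    _ = c₁ + c₂ * ∫ ω, X ω ∂ν := by
        rw [integral_add (integrable_const c₁) (hXint.const_mul c₂),
          integral_const, integral_const_mul]
        simp
    _ = c₁ := by rw [hmean]; ring
    _ = Real.cosh s := by rw [Real.cosh_eq]
    _ ≤ Real.exp (s ^ 2 / 2) := Real.cosh_le_exp_half_sq s

/-- If a finite family of real random variables is independent with respect to a Markov
kernel and a measure, then for almost every point of the base, the family is independent
with respect to the corresponding measure. -/
lemma kernel_ae_iIndepFun {α Ω : Type*} {mα : MeasurableSpace α} {mΩ : MeasurableSpace Ω}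
    {κ : Kernel α Ω} {μ : Measure α} [IsMarkovKernel κ]
    {n : ℕ} {H : Fin n → Ω → ℝ} (hH : ∀ i, Measurable (H i))
    (h : Kernel.iIndepFun (m := fun _ => Real.measurableSpace) H κ μ) :
    ∀ᵐ a ∂μ, iIndepFun (m := fun _ => Real.measurableSpace) H (κ a) := by
  classical
  have key : ∀ (S : Finset (Fin n)) (q : Fin n → ℚ), ∀ᵐ a ∂μ,
      κ a (⋂ i ∈ S, H i ⁻¹' Set.Iic ((q i : ℝ))) =
        ∏ i ∈ S, κ a (H i ⁻¹' Set.Iic ((q i : ℝ))) := by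
    intro S q
    exact h.meas_biInter (s := fun i => H i ⁻¹' Set.Iic ((q i : ℝ)))
      (fun i _ => ⟨Set.Iic ((q i : ℝ)), measurableSet_Iic, rfl⟩)
  have key' : ∀ᵐ a ∂μ, ∀ (S : Finset (Fin n)) (q : Fin n → ℚ),
      κ a (⋂ i ∈ S, H i ⁻¹' Set.Iic ((q i : ℝ))) =
        ∏ i ∈ S, κ a (H i ⁻¹' Set.Iic ((q i : ℝ))) :=
    ae_all_iff.2 fun S => ae_all_iff.2 fun q => key S q
  filter_upwards [key'] with a ha
  haveI : IsProbabilityMeasure (κ a) := inferInstance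
  set pisys : Fin n → Set (Set Ω) :=
    fun i => (Set.preimage (H i)) '' (⋃ q : ℚ, {Set.Iic ((q : ℝ))}) with hpisys
  have hmem : ∀ (i : Fin n) (q : ℚ), H i ⁻¹' Set.Iic ((q : ℝ)) ∈ pisys i := by
    intro i q
    exact ⟨Set.Iic ((q : ℝ)), Set.mem_iUnion.2 ⟨q, rfl⟩, rfl⟩
  have h_pi : ∀ i, IsPiSystem (pisys i) := by
    intro i s hs t ht _
    obtain ⟨s', hs', rfl⟩ := hs
    obtain ⟨t', ht', rfl⟩ := ht
    obtain ⟨q, hq⟩ := Set.mem_iUnion.1 hs'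
    obtain ⟨r, hr⟩ := Set.mem_iUnion.1 ht'
    rw [Set.mem_singleton_iff] at hq hr
    subst hq; subst hr
    rw [← Set.preimage_inter, Set.Iic_inter_Iic]
    have hcast : (min (q : ℝ) (r : ℝ)) = ((min q r : ℚ) : ℝ) := by
      rw [Rat.cast_min]
    rw [hcast]
    exact hmem i _
  have h_gen : ∀ i, MeasurableSpace.comap (H i) Real.measurableSpace
      = MeasurableSpace.generateFrom (pisys i) := by
    intro i
    have hre : (Real.measurableSpace : MeasurableSpace ℝ)
        = MeasurableSpace.generateFrom (⋃ q : ℚ, {Set.Iic ((q : ℝ))}) := by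
      rw [BorelSpace.measurable_eq (α := ℝ), Real.borel_eq_generateFrom_Iic_rat]
    rw [hre, MeasurableSpace.comap_generateFrom]
  have h_ind : iIndepSets pisys (κ a) := by
    rw [iIndepSets_iff]
    intro S f hf
    have hchoice : ∀ i ∈ S, ∃ q : ℚ, f i = H i ⁻¹' Set.Iic ((q : ℝ)) := by
      intro i hi
      obtain ⟨x, hx, hfx⟩ := hf i hi
      obtain ⟨q, hq⟩ := Set.mem_iUnion.1 hx
      rw [Set.mem_singleton_iff] at hq
      exact ⟨q, by rw [← hfx, hq]⟩
    choose! q hq using hchoice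
    calc κ a (⋂ i ∈ S, f i)
        = κ a (⋂ i ∈ S, H i ⁻¹' Set.Iic ((q i : ℝ))) := by
          congr 1
          exact Set.iInter₂_congr hq
      _ = ∏ i ∈ S, κ a (H i ⁻¹' Set.Iic ((q i : ℝ))) := ha S q
      _ = ∏ i ∈ S, κ a (f i) := by
          refine Finset.prod_congr rfl fun i hi => ?_
          rw [hq i hi]
  rw [iIndepFun_iff_iIndep]
  exact iIndepSets.iIndep (fun i => (hH i).comap_le) pisys h_pi h_gen h_ind

/-- An `m`-measurable bounded function is a.e. constant under the conditional
expectation kernel. -/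
lemma condexpKernel_ae_eq_self {Ω : Type*} {m mΩ : MeasurableSpace Ω} (hm : m ≤ mΩ)
    [StandardBorelSpace Ω] (μ : Measure Ω) [IsProbabilityMeasure μ]
    {f : Ω → ℝ} (hf : Measurable[m] f) (hbdd : ∀ ω, |f ω| ≤ 1) :
    ∀ᵐ ω ∂μ, ∀ᵐ y ∂(ProbabilityTheory.condExpKernel μ m ω), f y = f ω := by
  have hfΩ : Measurable[mΩ] f := hf.mono hm le_rfl
  have hint : Integrable f μ := by
    refine Integrable.mono' (integrable_const 1) hfΩ.aestronglyMeasurable ?_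
    exact Filter.Eventually.of_forall fun ω => by simpa using hbdd ω
  have hint2 : Integrable (fun y => f y ^ 2) μ := by
    refine Integrable.mono' (integrable_const 1) (hfΩ.pow_const 2).aestronglyMeasurable ?_
    refine Filter.Eventually.of_forall fun ω => ?_
    rw [Real.norm_eq_abs, abs_pow]
    calc |f ω| ^ 2 ≤ 1 ^ 2 := pow_le_pow_left₀ (abs_nonneg _) (hbdd ω) 2
      _ = 1 := one_pow 2
  have h1 : μ[f|m] =ᵐ[μ] fun ω => ∫ y, f y ∂(ProbabilityTheory.condExpKernel μ m ω) :=
    ProbabilityTheory.condExp_ae_eq_integral_condExpKernel hm hint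
  have h1' : μ[f|m] = f := condExp_of_stronglyMeasurable hm hf.stronglyMeasurable hint
  have h2 : μ[fun y => f y ^ 2|m]
      =ᵐ[μ] fun ω => ∫ y, f y ^ 2 ∂(ProbabilityTheory.condExpKernel μ m ω) :=
    ProbabilityTheory.condExp_ae_eq_integral_condExpKernel hm hint2
  have h2' : μ[fun y => f y ^ 2|m] = fun y => f y ^ 2 :=
    condExp_of_stronglyMeasurable hm ((hf.pow_const 2).stronglyMeasurable) hint2
  rw [h1'] at h1
  rw [h2'] at h2
  filter_upwards [h1.symm, h2.symm, hint.condExpKernel_ae, hint2.condExpKernel_ae]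
    with ω hω1 hω2 hκ1 hκ2
  haveI : IsProbabilityMeasure (ProbabilityTheory.condExpKernel μ m ω) := inferInstance
  set ν := ProbabilityTheory.condExpKernel μ m ω with hν
  have hω1' : ∫ y, f y ∂ν = f ω := by simpa using hω1
  have hω2' : ∫ y, f y ^ 2 ∂ν = f ω ^ 2 := by simpa using hω2
  have hsub : Integrable (fun y => f y ^ 2 - 2 * f ω * f y) ν :=
    hκ2.sub (hκ1.const_mul (2 * f ω))
  have hgint : Integrable (fun y => (f y - f ω) ^ 2) ν := by
    have hexp : ∀ y, (f y - f ω) ^ 2 = (f y ^ 2 - 2 * f ω * f y) + f ω ^ 2 :=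
      fun y => by ring
    simp_rw [hexp]
    exact hsub.add (integrable_const _)
  have hzero : ∫ y, (f y - f ω) ^ 2 ∂ν = 0 := by
    have hexp : ∀ y, (f y - f ω) ^ 2 = (f y ^ 2 - 2 * f ω * f y) + f ω ^ 2 :=
      fun y => by ring
    calc ∫ y, (f y - f ω) ^ 2 ∂ν
        = ∫ y, ((f y ^ 2 - 2 * f ω * f y) + f ω ^ 2) ∂ν := by simp_rw [hexp]
      _ = (∫ y, (f y ^ 2 - 2 * f ω * f y) ∂ν) + ∫ _, (f ω ^ 2 : ℝ) ∂ν :=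
          integral_add hsub (integrable_const _)
      _ = ((∫ y, f y ^ 2 ∂ν) - ∫ y, 2 * f ω * f y ∂ν) + f ω ^ 2 := by
          rw [integral_sub hκ2 (hκ1.const_mul _), integral_const]
          simp
      _ = 0 := by
          rw [hω2', integral_const_mul, hω1']
          ring
  have hae := (integral_eq_zero_iff_of_nonneg_ae
    (Filter.Eventually.of_forall fun y => sq_nonneg (f y - f ω)) hgint).1 hzero
  filter_upwards [hae] with y hy
  have hy' : (f y - f ω) ^ 2 = 0 := hy
  have := pow_eq_zero_iff (two_ne_zero) |>.1 hy'
  linarith [this]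

/-- Null sets stay null under the conditional expectation kernel, a.e. -/
lemma condexpKernel_null_of_null {Ω : Type*} {m mΩ : MeasurableSpace Ω} (hm : m ≤ mΩ)
    [StandardBorelSpace Ω] (μ : Measure Ω) [IsProbabilityMeasure μ]
    {s : Set Ω} (hs : MeasurableSet[mΩ] s) (h0 : μ s = 0) :
    ∀ᵐ ω ∂μ, ProbabilityTheory.condExpKernel μ m ω s = 0 := by
  have h := ProbabilityTheory.condExpKernel_ae_eq_condExp hm (μ := μ) hs
  have hind : (s.indicator (fun _ => (1 : ℝ))) =ᵐ[μ] 0 := by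
    have hnm : ∀ᵐ x ∂μ, x ∉ s := by
      rw [ae_iff]
      simpa using h0
    filter_upwards [hnm] with x hx
    simp [Set.indicator_of_notMem hx]
  have hcond : μ⟦s | m⟧ =ᵐ[μ] 0 := by
    calc μ⟦s | m⟧ =ᵐ[μ] μ[(0 : Ω → ℝ)|m] := condExp_congr_ae hind
      _ = 0 := condExp_zero
  filter_upwards [h, hcond] with ω hω hc
  have h2 : ((ProbabilityTheory.condExpKernel μ m) ω s).toReal = 0 := by
    have := hω.trans hc
    simpa [measureReal_def] using this
  haveI : IsProbabilityMeasure (ProbabilityTheory.condExpKernel μ m ω) := inferInstance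
  have hne : ProbabilityTheory.condExpKernel μ m ω s ≠ ⊤ := measure_ne_top _ _
  exact (ENNReal.toReal_eq_zero_iff _).1 h2 |>.resolve_right hne

end Aux

/-- Conditional Hoeffding bound for a weighted sum: with `𝒢`-measurable nonnegative
weights summing to 1 and conditionally independent `H i` with `|H i| ≤ 1` and
`E[H i | 𝒢] = 0`, we have `E[exp (t Σ wᵢ Hᵢ)] ≤ E[exp ((t²/2) Σ wᵢ²)]`. -/
theorem conditional_hoeffding_weighted_sum
    {Ω : Type*} (m : MeasurableSpace Ω) {mΩ : MeasurableSpace Ω} [StandardBorelSpace Ω]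
    (μ : Measure Ω) [IsProbabilityMeasure μ]
    (hm : m ≤ mΩ)
    (n : ℕ) (w : Fin n → Ω → ℝ) (H : Fin n → Ω → ℝ)
    (hw_meas : ∀ i, Measurable[m] (w i))
    (hw_nonneg : ∀ i ω, 0 ≤ w i ω)
    (hw_sum : ∀ ω, ∑ i, w i ω = 1)
    (hH_meas : ∀ i, Measurable (H i))
    (hH_bdd : ∀ i, ∀ᵐ ω ∂μ, |H i ω| ≤ 1)
    (hH_mean : ∀ i, μ[H i | m] =ᵐ[μ] 0)
    (hH_indep : ProbabilityTheory.iCondIndepFun m hm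
      (m := fun _ => Real.measurableSpace) H μ) :
    ∀ t : ℝ, ∫ ω, Real.exp (t * ∑ i, w i ω * H i ω) ∂μ
      ≤ ∫ ω, Real.exp ((t^2 / 2) * ∑ i, (w i ω)^2) ∂μ := by
  intro t
  classical
  set κ := ProbabilityTheory.condExpKernel (mΩ := mΩ) μ m with hκ
  haveI hκMarkov : ProbabilityTheory.IsMarkovKernel κ :=
    inferInstanceAs (ProbabilityTheory.IsMarkovKernel
      (ProbabilityTheory.condExpKernel (mΩ := mΩ) μ m))
  have hH_measΩ : ∀ i, Measurable[mΩ] (H i) := fun i => hH_meas i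
  -- basic facts about the weights
  have hwle : ∀ i ω, w i ω ≤ 1 := fun i ω => by
    calc w i ω ≤ ∑ j, w j ω :=
          Finset.single_le_sum (fun j _ => hw_nonneg j ω) (Finset.mem_univ i)
      _ = 1 := hw_sum ω
  have hw_measΩ : ∀ i, Measurable[mΩ] (w i) := fun i => (hw_meas i).mono hm le_rfl
  -- the integrand on the left
  set f : Ω → ℝ := fun ω => Real.exp (t * ∑ i, w i ω * H i ω) with hf
  have hfmeas : Measurable[mΩ] f := by
    apply Measurable.exp
    apply Measurable.const_mul
    exact Finset.measurable_sum _ (fun i _ => (hw_measΩ i).mul (hH_measΩ i))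
  have habs : ∀ᵐ ω ∂μ, ∀ i, |H i ω| ≤ 1 := ae_all_iff.2 hH_bdd
  have hfint : Integrable f μ := by
    refine Integrable.mono' (integrable_const (Real.exp |t|)) hfmeas.aestronglyMeasurable ?_
    filter_upwards [habs] with ω hω
    rw [Real.norm_eq_abs, abs_of_pos (Real.exp_pos _)]
    refine Real.exp_le_exp.2 ?_
    calc t * ∑ i, w i ω * H i ω ≤ |t * ∑ i, w i ω * H i ω| := le_abs_self _
      _ = |t| * |∑ i, w i ω * H i ω| := abs_mul _ _
      _ ≤ |t| * 1 := by
          refine mul_le_mul_of_nonneg_left ?_ (abs_nonneg t)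
          calc |∑ i, w i ω * H i ω| ≤ ∑ i, |w i ω * H i ω| :=
                Finset.abs_sum_le_sum_abs _ _
            _ ≤ ∑ i, w i ω := by
                refine Finset.sum_le_sum fun i _ => ?_
                rw [abs_mul, abs_of_nonneg (hw_nonneg i ω)]
                calc w i ω * |H i ω| ≤ w i ω * 1 :=
                      mul_le_mul_of_nonneg_left (hω i) (hw_nonneg i ω)
                  _ = w i ω := mul_one _
            _ = 1 := hw_sum ω
      _ = |t| := mul_one _
  -- a.e. independence under the kernel
  have hindep : ∀ᵐ ω ∂μ,
      ProbabilityTheory.iIndepFun (m := fun _ => Real.measurableSpace) H (κ ω) :=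
    ae_of_ae_trim hm (kernel_ae_iIndepFun hH_measΩ hH_indep)
  -- freezing of weights
  have hfreeze : ∀ᵐ ω ∂μ, ∀ i, ∀ᵐ y ∂(κ ω), w i y = w i ω := by
    refine ae_all_iff.2 fun i => ?_
    refine condexpKernel_ae_eq_self hm μ (hw_meas i) fun ω => ?_
    rw [abs_of_nonneg (hw_nonneg i ω)]
    exact hwle i ω
  -- boundedness under the kernel
  have hbk : ∀ᵐ ω ∂μ, ∀ i, ∀ᵐ y ∂(κ ω), |H i y| ≤ 1 := by
    refine ae_all_iff.2 fun i => ?_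
    set s : Set Ω := {y | ¬ |H i y| ≤ 1} with hs
    have hsmeas : MeasurableSet[mΩ] s := by
      have hseq : s = H i ⁻¹' {x : ℝ | ¬ |x| ≤ 1} := by
        ext y; simp [hs]
      have ht : MeasurableSet {x : ℝ | ¬ |x| ≤ 1} := by
        have : {x : ℝ | ¬ |x| ≤ 1} = (fun x : ℝ => |x|) ⁻¹' Set.Ioi 1 := by
          ext x; simp [not_le]
        rw [this]
        exact measurable_abs measurableSet_Ioi
      rw [hseq]
      exact (hH_measΩ i) ht
    have hs0 : μ s = 0 := by
      have := hH_bdd i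
      rwa [ae_iff] at this
    have := condexpKernel_null_of_null hm μ hsmeas hs0
    filter_upwards [this] with ω hω
    rw [ae_iff]
    exact hω
  -- vanishing conditional mean under the kernel
  have hHint : ∀ i, Integrable (H i) μ := fun i => by
    refine Integrable.mono' (integrable_const 1) (hH_measΩ i).aestronglyMeasurable ?_
    filter_upwards [hH_bdd i] with ω hω
    simpa using hω
  have hmk : ∀ᵐ ω ∂μ, ∀ i, ∫ y, H i y ∂(κ ω) = 0 := by
    refine ae_all_iff.2 fun i => ?_
    have h := ProbabilityTheory.condExp_ae_eq_integral_condExpKernel (mΩ := mΩ) hm (hHint i)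
    filter_upwards [h, hH_mean i] with ω hω hmean
    have := hω.symm.trans hmean
    simpa using this
  -- the main a.e. bound
  set F : Ω → ℝ := fun ω => ∫ y, f y ∂(κ ω) with hF
  set G : Ω → ℝ := fun ω => Real.exp ((t^2 / 2) * ∑ i, (w i ω)^2) with hG
  have key : ∀ᵐ ω ∂μ, F ω ≤ G ω := by
    filter_upwards [hindep, hfreeze, hbk, hmk] with ω hind hfz hbkω hmkω
    haveI : IsProbabilityMeasure (κ ω) := inferInstance
    set X : Fin n → Ω → ℝ := fun i y => w i ω * H i y with hX
    have hXmeas : ∀ i, Measurable[mΩ] (X i) := fun i => (hH_measΩ i).const_mul _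
    have hXindep : ProbabilityTheory.iIndepFun (m := fun _ => Real.measurableSpace) X (κ ω) := by
      have := hind.comp (fun i x => w i ω * x) (fun i => measurable_id.const_mul _)
      exact this
    have e1 : F ω = ∫ y, Real.exp (t * ∑ i, X i y) ∂(κ ω) := by
      refine integral_congr_ae ?_
      have hall : ∀ᵐ y ∂(κ ω), ∀ i, w i y = w i ω := ae_all_iff.2 hfz
      filter_upwards [hall] with y hy
      show Real.exp (t * ∑ i, w i y * H i y) = Real.exp (t * ∑ i, w i ω * H i y)
      congr 1
      congr 1
      exact Finset.sum_congr rfl fun i _ => by rw [hy i]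
    have e2 : ∫ y, Real.exp (t * ∑ i, X i y) ∂(κ ω)
        = ∏ i, ∫ y, Real.exp (t * X i y) ∂(κ ω) := by
      have h := hXindep.mgf_sum (t := t) hXmeas Finset.univ
      simpa [ProbabilityTheory.mgf, Finset.sum_apply] using h
    have e3 : ∀ i, ∫ y, Real.exp (t * X i y) ∂(κ ω)
        ≤ Real.exp ((t * w i ω)^2 / 2) := by
      intro i
      have hXy : ∀ y, t * X i y = (t * w i ω) * H i y := fun y => by
        show t * (w i ω * H i y) = (t * w i ω) * H i y; ring
      simp_rw [hXy]
      exact hoeffding_aux_lemma (κ ω) (hH_measΩ i) (hbkω i) (hmkω i) (t * w i ω)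
    calc F ω = ∫ y, Real.exp (t * ∑ i, X i y) ∂(κ ω) := e1
      _ = ∏ i, ∫ y, Real.exp (t * X i y) ∂(κ ω) := e2
      _ ≤ ∏ i, Real.exp ((t * w i ω)^2 / 2) := by
          refine Finset.prod_le_prod (fun i _ => ?_) (fun i _ => e3 i)
          exact integral_nonneg fun y => (Real.exp_pos _).le
      _ = Real.exp (∑ i, (t * w i ω)^2 / 2) := by
          rw [Real.exp_sum]
      _ = G ω := by
          show _ = Real.exp ((t^2 / 2) * ∑ i, (w i ω)^2)
          congr 1
          rw [Finset.mul_sum]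
          exact Finset.sum_congr rfl fun i _ => by ring
  -- integrability of `F` and `G`
  have hFint : Integrable F μ :=
    MeasureTheory.Integrable.integral_condExpKernel (m := m) (mΩ := mΩ) hfint
  have hGmeas : Measurable[mΩ] G := by
    apply Measurable.exp
    apply Measurable.const_mul
    exact Finset.measurable_sum _ (fun i _ => (hw_measΩ i).pow_const 2)
  have hGint : Integrable G μ := by
    refine Integrable.mono' (integrable_const (Real.exp (t^2 / 2)))
      hGmeas.aestronglyMeasurable ?_
    refine Filter.Eventually.of_forall fun ω => ?_
    rw [Real.norm_eq_abs, abs_of_pos (Real.exp_pos _)]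
    refine Real.exp_le_exp.2 ?_
    have h1 : ∑ i, (w i ω)^2 ≤ 1 := by
      calc ∑ i, (w i ω)^2 ≤ ∑ i, w i ω := by
            refine Finset.sum_le_sum fun i _ => ?_
            calc (w i ω)^2 = w i ω * w i ω := sq (w i ω)
              _ ≤ 1 * w i ω := mul_le_mul_of_nonneg_right (hwle i ω) (hw_nonneg i ω)
              _ = w i ω := one_mul _
        _ = 1 := hw_sum ω
    have h2 : (0:ℝ) ≤ t^2 / 2 := by positivity
    calc t^2 / 2 * ∑ i, (w i ω)^2 ≤ t^2 / 2 * 1 := mul_le_mul_of_nonneg_left h1 h2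
      _ = t^2 / 2 := mul_one _
  -- conclusion
  calc ∫ ω, f ω ∂μ = ∫ ω, (μ[f|m]) ω ∂μ := (integral_condExp (μ := μ) (f := f) hm).symm
    _ = ∫ ω, F ω ∂μ := integral_congr_ae
        (ProbabilityTheory.condExp_ae_eq_integral_condExpKernel (mΩ := mΩ) hm hfint)
    _ ≤ ∫ ω, G ω ∂μ := integral_mono_ae hFint hGint key
end

section
/- If Y is a real random variable and V is uniform on [0,1] independent of a σ-algebra 𝒢 with F(y) = P(Y ≤ y | 𝒢) continuous, then one can couple: there exists a uniform [0,1] random variable U such that {Y ≤ y} = {U ≤ F(y)} almost surely for all y (i.e., U = F(Y) is uniformly distributed when F is the continuous CDF of Y). -/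
/-! If `F` is continuous, each sublevel set `{F ≤ u}` is a ray `Iic a` with `F a = u` (take `a` its
supremum), so `P (F Y ≤ u) = P (Y ≤ a) = u` for `u ∈ [0, 1]`. The same computation with `u = F y`
shows that the event `{F Y ≤ F y}`, which contains `{Y ≤ y}`, has the same probability. -/

open MeasureTheory Set Filter Topology ProbabilityTheory

theorem Monotone.exists_preimage_Iic_eq_Iic {α β : Type*} [ConditionallyCompleteLinearOrder α]
    [TopologicalSpace α] [OrderTopology α] [DenselyOrdered α] [NoMaxOrder α] [LinearOrder β]
    [TopologicalSpace β] [OrderClosedTopology β] {F : α → β} (hmono : Monotone F)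
    (hcont : Continuous F) {u : β} (hle : ∃ x, F x ≤ u) (hlt : ∃ x, u < F x) :
    ∃ a, F ⁻¹' Iic u = Iic a ∧ F a = u := by
  obtain ⟨b, hb⟩ := hlt
  set s := F ⁻¹' Iic u
  have hbdd : BddAbove s :=
    ⟨b, fun x hx => le_of_not_gt fun hbx => (hb.trans_le (hmono hbx.le)).not_ge hx⟩
  have hmem : sSup s ∈ s := (isClosed_Iic.preimage hcont).csSup_mem hle hbdd
  refine ⟨sSup s, Subset.antisymm (fun x hx => le_csSup hbdd hx)
    (fun x hx => (hmono hx).trans hmem), le_antisymm hmem ?_⟩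
  -- every point to the right of `sSup s` lies outside `s`, so `u ≤ F (sSup s)` by right-continuity
  refine _root_.ge_of_tendsto (x := 𝓝[>] sSup s)
    (hcont.continuousAt.mono_left nhdsWithin_le_nhds) ?_
  filter_upwards [self_mem_nhdsWithin] with x hx
  exact le_of_lt (not_le.mp fun h => hx.not_ge (le_csSup hbdd h))

section ContinuousCDF

variable (ν : Measure ℝ) [IsProbabilityMeasure ν]

theorem measure_cdf_preimage_Iic (hcont : Continuous (cdf ν)) (u : ℝ) :
    ν (cdf ν ⁻¹' Iic u) = ENNReal.ofReal (min u 1) := by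
  by_cases hall : ∀ x, cdf ν x ≤ u
  · have h1u : 1 ≤ u := le_of_tendsto' (tendsto_cdf_atTop ν) hall
    rw [show cdf ν ⁻¹' Iic u = univ from eq_univ_of_forall hall, measure_univ,
      min_eq_right h1u, ENNReal.ofReal_one]
  by_cases hnone : ∀ x, u < cdf ν x
  · have hu0 : u ≤ 0 := ge_of_tendsto' (tendsto_cdf_atBot ν) fun x => (hnone x).le
    rw [show cdf ν ⁻¹' Iic u = ∅ from eq_empty_of_forall_notMem fun x hx => (hnone x).not_ge hx,
      measure_empty, ENNReal.ofReal_eq_zero.mpr ((min_le_left _ _).trans hu0)]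
  push Not at hall hnone
  obtain ⟨a, hpre, rfl⟩ := (monotone_cdf ν).exists_preimage_Iic_eq_Iic hcont hnone hall
  rw [hpre, min_eq_left (cdf_le_one ν a), ofReal_cdf]

theorem map_cdf_eq_restrict_Icc (hcont : Continuous (cdf ν)) :
    ν.map (cdf ν) = volume.restrict (Icc 0 1) := by
  have : IsProbabilityMeasure (ν.map (cdf ν)) :=
    Measure.isProbabilityMeasure_map hcont.measurable.aemeasurable
  refine Measure.ext_of_Iic _ _ fun u => ?_
  have hinter : Iic u ∩ Icc 0 1 = Icc 0 (min u 1) := by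
    ext; simp only [mem_inter_iff, mem_Iic, mem_Icc, le_min_iff]; tauto
  rw [Measure.map_apply hcont.measurable measurableSet_Iic, measure_cdf_preimage_Iic ν hcont,
    Measure.restrict_apply measurableSet_Iic, hinter, Real.volume_Icc, sub_zero]

theorem cdf_preimage_Iic_cdf_ae_eq (hcont : Continuous (cdf ν)) (y : ℝ) :
    cdf ν ⁻¹' Iic (cdf ν y) =ᵐ[ν] Iic y := by
  refine (ae_eq_of_subset_of_measure_ge (s := Iic y) (t := cdf ν ⁻¹' Iic (cdf ν y))
    (fun _ hx => monotone_cdf ν hx) ?_ nullMeasurableSet_Iic (measure_ne_top _ _)).symm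
  rw [measure_cdf_preimage_Iic ν hcont, min_eq_left (cdf_le_one ν y), ofReal_cdf]

end ContinuousCDF

/-- Probability integral transform: if `Y` has continuous CDF `F`, then there is a
uniform-`[0,1]` random variable `U` (namely `U = F ∘ Y`) such that for every `y`,
the events `{Y ≤ y}` and `{U ≤ F y}` agree up to a null set. -/
theorem probability_integral_transform
    {Ω : Type*} [MeasurableSpace Ω] (μ : Measure Ω) [IsProbabilityMeasure μ]
    (Y : Ω → ℝ) (hY : Measurable Y)
    (F : ℝ → ℝ) (hF_def : ∀ y, F y = (μ {ω | Y ω ≤ y}).toReal)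
    (hF_cont : Continuous F) :
    ∃ U : Ω → ℝ, Measurable U ∧
      Measure.map U μ = volume.restrict (Icc (0:ℝ) 1) ∧
      ∀ y : ℝ, μ (symmDiff {ω | Y ω ≤ y} {ω | U ω ≤ F y}) = 0 := by
  have : IsProbabilityMeasure (μ.map Y) := Measure.isProbabilityMeasure_map hY.aemeasurable
  have hF : F = cdf (μ.map Y) := funext fun y => by
    rw [hF_def, cdf_eq_real, measureReal_def, Measure.map_apply hY measurableSet_Iic]
    rfl
  subst hF
  refine ⟨cdf (μ.map Y) ∘ Y, hF_cont.measurable.comp hY, ?_, fun y => ?_⟩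
  · rw [← Measure.map_map hF_cont.measurable hY, map_cdf_eq_restrict_Icc _ hF_cont]
  · exact measure_symmDiff_eq_zero_iff.mpr
      ((hY.quasiMeasurePreserving μ).preimage_ae_eq (cdf_preimage_Iic_cdf_ae_eq _ hF_cont y)).symm
end
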